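/- arXiv:cs/0607073 — 5 statements merged into one kernel-verified Lean document; each statement's English description precedes it below -/
import Mathlib

section
/- Fix k ≥ 2 and β ∈ (0, ∞), and define f(x₁,…,x_{k-1}) = -(1/2)·log(1 - ((1 - e^{-β})/2^{k-1})·∏_{i=1}^{k-1}(1 - tanh x_i)). If x₁,…,x_n ≥ 0 (for some n ≤ k-1), then for every index i, 0 ≤ -∂f/∂x_i(x₁,…,x_{k-1}) ≤ 2^{-n}. -/
/-!
Along the `i`-th coordinate, `f` is `t ↦ -½ log (1 - q (1 - tanh t))` with
`q = c ∏_{j ≠ i} (1 - tanh xⱼ)`, so `-∂ᵢf = q (1 - y²) / (2 (1 - q (1 - y)))` where `y = tanh xᵢ`.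
Each factor `1 - tanh xⱼ` is at most `1` when `xⱼ ≥ 0` and below `2` otherwise, and
`c ≤ 2^{-(k-1)}`; hence `q ≤ 2^{-n}`, and even `q ≤ 2^{-n-1}` when `i ≥ n`, so `q ≤ ½` in both
cases. In the first case `y ≥ 0` keeps the denominator at least `1` and the numerator at most
`q`; in the second the denominator is at least `1 + y`, which cancels the factor `1 + y` of `1 - y²`.
-/

open Real Finset

namespace Real

theorem tanh_nonneg {x : ℝ} (hx : 0 ≤ x) : 0 ≤ tanh x := by
  rw [tanh_eq_sinh_div_cosh]
  exact div_nonneg (sinh_nonneg_iff.mpr hx) (cosh_pos x).le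

theorem hasDerivAt_tanh (x : ℝ) : HasDerivAt tanh (1 - tanh x ^ 2) x := by
  have h := (hasDerivAt_sinh x).div (hasDerivAt_cosh x) (cosh_pos x).ne'
  rw [show tanh = sinh / cosh from funext tanh_eq_sinh_div_cosh]
  refine h.congr_deriv ?_
  have := (cosh_pos x).ne'
  simp only [Pi.div_apply]
  field_simp

end Real

theorem Finset.prod_comp_update {ι α M : Type*} [Fintype ι] [DecidableEq ι] [CommMonoid M]
    (g : α → M) (x : ι → α) (i : ι) (t : α) :
    ∏ j, g (Function.update x i t j) = g t * ∏ j ∈ univ.erase i, g (x j) := by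
  simp_rw [← Function.comp_apply (f := g), Function.comp_update,
    prod_update_of_mem (mem_univ i), sdiff_singleton_eq_erase]

theorem Fin.prod_ite_lt {M : Type*} [CommMonoid M] {m n : ℕ} (hn : n ≤ m) (a b : M) :
    ∏ j : Fin m, (if (j : ℕ) < n then a else b) = a ^ n * b ^ (m - n) := by
  obtain ⟨d, rfl⟩ := Nat.exists_eq_add_of_le hn
  rw [Fin.prod_univ_eq_prod_range (fun j => if j < n then a else b), prod_range_add]
  simp [prod_ite_of_true]

theorem prod_one_sub_tanh_le {ι : Type*} (s : Finset ι) (p : ι → Prop) [DecidablePred p]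
    {x : ι → ℝ} (hx : ∀ j, p j → 0 ≤ x j) :
    ∏ j ∈ s, (1 - tanh (x j)) ≤ ∏ j ∈ s, (if p j then 1 else 2) := by
  refine prod_le_prod (fun j _ => (sub_pos.2 (tanh_lt_one _)).le) fun j _ => ?_
  split_ifs with hj
  · linarith [tanh_nonneg (hx j hj)]
  · linarith [neg_one_lt_tanh (x j)]

theorem mul_prod_erase_one_sub_tanh_mul_le {m n : ℕ} (hn : n ≤ m) {x : Fin m → ℝ}
    (hx : ∀ j : Fin m, (j : ℕ) < n → 0 ≤ x j) (i : Fin m) {c : ℝ} (hc : c ≤ 1 / 2 ^ m) :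
    c * (∏ j ∈ univ.erase i, (1 - tanh (x j))) * (if (i : ℕ) < n then 1 else 2) ≤ 1 / 2 ^ n := by
  have hw : (∏ j ∈ univ.erase i, (if (j : ℕ) < n then 1 else 2)) * (if (i : ℕ) < n then 1 else 2)
      = (2 : ℝ) ^ (m - n) := by
    rw [prod_erase_mul _ _ (mem_univ i), Fin.prod_ite_lt hn, one_pow, one_mul]
  calc _ = c * ((∏ j ∈ univ.erase i, (1 - tanh (x j))) * (if (i : ℕ) < n then 1 else 2)) :=
        mul_assoc _ _ _
    _ ≤ 1 / 2 ^ m * 2 ^ (m - n) := by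
      rw [← hw]
      refine mul_le_mul hc (mul_le_mul_of_nonneg_right (prod_one_sub_tanh_le _ _ hx) ?_)
        (mul_nonneg (prod_nonneg fun j _ => (sub_pos.2 (tanh_lt_one _)).le) ?_) (by positivity)
      all_goals split_ifs <;> norm_num
    _ = 1 / 2 ^ n := by
      obtain ⟨d, rfl⟩ := Nat.exists_eq_add_of_le hn
      rw [Nat.add_sub_cancel_left, pow_add]
      field_simp

/-- `-∂ᵢf` in terms of `q = c ∏_{j ≠ i} (1 - tanh xⱼ)` and `y = tanh xᵢ`. -/
noncomputable def bpSlope (q y : ℝ) : ℝ := q * (1 - y ^ 2) / (2 * (1 - q * (1 - y)))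

section bpSlope

variable {q y : ℝ}

theorem one_sub_mul_one_sub_pos (hq₀ : 0 ≤ q) (hq : q ≤ 1 / 2) (hy : -1 < y) :
    0 < 1 - q * (1 - y) := by
  rcases le_total y 1 with hy₁ | hy₁ <;> nlinarith

theorem bpSlope_nonneg (hq₀ : 0 ≤ q) (hq : q ≤ 1 / 2) (hy₁ : -1 < y) (hy₂ : y < 1) :
    0 ≤ bpSlope q y :=
  div_nonneg (mul_nonneg hq₀ (by nlinarith))
    (mul_nonneg zero_le_two (one_sub_mul_one_sub_pos hq₀ hq hy₁).le)

theorem bpSlope_le_of_nonneg (hq₀ : 0 ≤ q) (hq : q ≤ 1 / 2) (hy₀ : 0 ≤ y) :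
    bpSlope q y ≤ q := by
  rw [bpSlope, div_le_iff₀ (by linarith [one_sub_mul_one_sub_pos hq₀ hq (by linarith : -1 < y)])]
  nlinarith [mul_nonneg hq₀ hy₀]

theorem bpSlope_le_two_mul (hq₀ : 0 ≤ q) (hq : q ≤ 1 / 2) (hy₁ : -1 < y) :
    bpSlope q y ≤ 2 * q := by
  rw [bpSlope, div_le_iff₀ (by linarith [one_sub_mul_one_sub_pos hq₀ hq hy₁])]
  nlinarith [mul_nonneg hq₀ (sub_nonneg.2 hq), mul_nonneg hq₀ (by linarith : (0:ℝ) ≤ 1 + y)]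

theorem le_half_of_mul_ite_le {i n : ℕ}
    (h : q * (if i < n then 1 else 2) ≤ 1 / 2 ^ n) : q ≤ 1 / 2 := by
  split_ifs at h with hi
  · calc q = q * 1 := (mul_one q).symm
      _ ≤ 1 / 2 ^ n := h
      _ ≤ 1 / 2 ^ 1 := one_div_pow_le_one_div_pow_of_le (by norm_num) (by omega)
      _ = 1 / 2 := by rw [pow_one]
  · have : (1 : ℝ) / 2 ^ n ≤ 1 := div_le_one_of_le₀ (one_le_pow₀ one_le_two) (by positivity)
    linarith

theorem bpSlope_le_mul_ite {i n : ℕ} (hq₀ : 0 ≤ q) (hq : q ≤ 1 / 2) (hy₁ : -1 < y)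
    (hy₀ : i < n → 0 ≤ y) : bpSlope q y ≤ q * (if i < n then 1 else 2) := by
  split_ifs with hi
  · exact (mul_one q).symm ▸ bpSlope_le_of_nonneg hq₀ hq (hy₀ hi)
  · exact mul_comm q 2 ▸ bpSlope_le_two_mul hq₀ hq hy₁

end bpSlope

theorem hasDerivAt_neg_half_log_one_sub_mul_one_sub_tanh {q t : ℝ}
    (h : 1 - q * (1 - tanh t) ≠ 0) :
    HasDerivAt (fun s => -(1 / 2) * log (1 - q * (1 - tanh s))) (-bpSlope q (tanh t)) t := by
  have hlog := ((((hasDerivAt_tanh t).const_sub 1).const_mul q).const_sub 1).log h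
  refine (hlog.const_mul (-(1 / 2))).congr_deriv ?_
  rw [bpSlope]
  field_simp

theorem bp_update_deriv_bound_general (k : ℕ) (β : ℝ) (hβ : 0 < β)
    (f : (Fin (k - 1) → ℝ) → ℝ)
    (hf : ∀ x, f x =
      -(1 / 2) * Real.log (1 - ((1 - Real.exp (-β)) / 2 ^ (k - 1)) *
        ∏ i, (1 - Real.tanh (x i))))
    (n : ℕ) (hn : n ≤ k - 1) (x : Fin (k - 1) → ℝ)
    (hx : ∀ j : Fin (k - 1), (j : ℕ) < n → 0 ≤ x j) :
    ∀ i : Fin (k - 1),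
      0 ≤ -deriv (fun t => f (Function.update x i t)) (x i) ∧
      -deriv (fun t => f (Function.update x i t)) (x i) ≤ 1 / 2 ^ n := by
  intro i
  set c := (1 - exp (-β)) / 2 ^ (k - 1)
  set q := c * ∏ j ∈ univ.erase i, (1 - tanh (x j))
  have hc₀ : 0 ≤ c := div_nonneg (by simp [hβ.le]) (by positivity)
  have hc : c ≤ 1 / 2 ^ (k - 1) :=
    div_le_div_of_nonneg_right (by linarith [exp_pos (-β)]) (by positivity)
  have hq₀ : 0 ≤ q := mul_nonneg hc₀ (prod_nonneg fun j _ => (sub_pos.2 (tanh_lt_one _)).le)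
  have hqw : q * (if (i : ℕ) < n then 1 else 2) ≤ 1 / 2 ^ n :=
    mul_prod_erase_one_sub_tanh_mul_le hn hx i hc
  have hrestrict : (fun t => f (Function.update x i t)) =
      fun t => -(1 / 2) * log (1 - q * (1 - tanh t)) := by
    funext t
    rw [hf, prod_comp_update (fun s => 1 - tanh s), mul_left_comm, mul_comm (1 - tanh t)]
  have hq : q ≤ 1 / 2 := le_half_of_mul_ite_le hqw
  have hy₁ := neg_one_lt_tanh (x i)
  have hy₂ := tanh_lt_one (x i)
  rw [hrestrict, (hasDerivAt_neg_half_log_one_sub_mul_one_sub_tanh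
    (one_sub_mul_one_sub_pos hq₀ hq hy₁).ne').deriv, neg_neg]
  exact ⟨bpSlope_nonneg hq₀ hq hy₁ hy₂,
    (bpSlope_le_mul_ite hq₀ hq hy₁ fun hi => tanh_nonneg (hx i hi)).trans hqw⟩

theorem bp_update_deriv_bound (k : ℕ) (hk : 2 ≤ k) (β : ℝ) (hβ : 0 < β)
    (f : (Fin (k - 1) → ℝ) → ℝ)
    (hf : ∀ x, f x =
      -(1 / 2) * Real.log (1 - ((1 - Real.exp (-β)) / 2 ^ (k - 1)) *
        ∏ i, (1 - Real.tanh (x i))))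
    (n : ℕ) (hn : n ≤ k - 1) (x : Fin (k - 1) → ℝ)
    (hx : ∀ j : Fin (k - 1), (j : ℕ) < n → 0 ≤ x j) :
    ∀ i : Fin (k - 1),
      0 ≤ -deriv (fun t => f (Function.update x i t)) (x i) ∧
      -deriv (fun t => f (Function.update x i t)) (x i) ≤ 1 / 2 ^ n :=
  bp_update_deriv_bound_general k β hβ f hf n hn x hx
end

section
/- Fix k ≥ 2 and β ∈ [0, ∞), and define g(x₁,…,x_k) = (e^{-β}·∏_{i=1}^k (1 - tanh x_i)/2) / (1 - (1 - e^{-β})·∏_{i=1}^k (1 - tanh x_i)/2). Then 0 ≤ g ≤ 1 and g is monotonically decreasing in each argument; moreover -1 ≤ ∂g/∂x_i ≤ 0 for each i. -/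
/-!
Along the coordinate `xᵢ` the function is `t ↦ φ (p t * c)`, where `p = (1 - tanh) / 2` is a
decreasing map into `(0, 1)`, `c ∈ [0, 1]` is the product of the other factors, and
`φ P = a P / (a P + (1 - P))` with `a = e^{-β}` is increasing from `φ 0 = 0` to `φ 1 = 1`.
This gives the bounds and the monotonicity. For the derivative, `p' = -2 p (1 - p)` and
`φ' = a / D²` with `D = a P + (1 - P)`, so
`|∂g/∂xᵢ| = 2 a P (1 - p) / D² ≤ 2 a P (1 - P) / D² ≤ 1/2` by AM-GM in the form `4 (a P) (1 - P) ≤ D²`.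
-/

open Real Finset Function

theorem Real.hasDerivAt_tanh_s5 (x : ℝ) : HasDerivAt tanh (1 - tanh x ^ 2) x := by
  have h := (hasDerivAt_sinh x).div (hasDerivAt_cosh x) (cosh_pos x).ne'
  rw [show tanh = sinh / cosh from funext tanh_eq_sinh_div_cosh]
  refine h.congr_deriv ?_
  rw [Pi.div_apply]
  field_simp

theorem Finset.prod_apply_update {ι α M : Type*} [Fintype ι] [DecidableEq ι] [CommMonoid M]
    (f : α → M) (x : ι → α) (i : ι) (t : α) :
    ∏ j, f (update x i t j) = f t * ∏ j ∈ univ \ {i}, f (x j) := by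
  simp_rw [apply_update (fun _ => f) x i t]
  exact prod_update_of_mem (mem_univ i) _ _

noncomputable def violationProb (y : ℝ) : ℝ := (1 - tanh y) / 2

theorem violationProb_pos (y : ℝ) : 0 < violationProb y := by
  unfold violationProb; linarith [tanh_lt_one y]

theorem violationProb_lt_one (y : ℝ) : violationProb y < 1 := by
  unfold violationProb; linarith [neg_one_lt_tanh y]

theorem hasDerivAt_violationProb (y : ℝ) :
    HasDerivAt violationProb (-(2 * violationProb y * (1 - violationProb y))) y := by
  refine (((hasDerivAt_tanh_s5 y).const_sub 1).div_const 2).congr_deriv ?_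
  unfold violationProb; ring

theorem violationProb_strictAnti : StrictAnti violationProb :=
  strictAnti_of_deriv_neg fun y => by
    rw [(hasDerivAt_violationProb y).deriv, neg_lt_zero]
    have := violationProb_pos y
    have := violationProb_lt_one y
    positivity

theorem prod_violationProb_mem_Icc {ι : Type*} (s : Finset ι) (x : ι → ℝ) :
    ∏ j ∈ s, violationProb (x j) ∈ Set.Icc 0 1 :=
  ⟨prod_nonneg fun j _ => (violationProb_pos (x j)).le,
    prod_le_one (fun j _ => (violationProb_pos (x j)).le)
      fun j _ => (violationProb_lt_one (x j)).le⟩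

/-- Weighting an event of probability `P` by `a` and its complement by `1` gives it probability
`a P / (a P + (1 - P))`. -/
noncomputable def gibbsReweight (a P : ℝ) : ℝ := a * P / (1 - (1 - a) * P)

theorem four_mul_le_sq_reweight_denom (a P : ℝ) :
    4 * (a * P) * (1 - P) ≤ (1 - (1 - a) * P) ^ 2 := by
  nlinarith [sq_nonneg (1 - P - a * P)]

section gibbsReweight

variable {a : ℝ}

theorem reweight_denom_pos (ha : 0 < a) {P : ℝ} (hP : P ∈ Set.Icc 0 1) :
    0 < 1 - (1 - a) * P := by
  nlinarith [hP.2, mul_nonneg ha.le hP.1]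

theorem gibbsReweight_mem_Icc (ha : 0 < a) {P : ℝ} (hP : P ∈ Set.Icc 0 1) :
    gibbsReweight a P ∈ Set.Icc 0 1 := by
  have hD := reweight_denom_pos ha hP
  refine ⟨div_nonneg (mul_nonneg ha.le hP.1) hD.le, ?_⟩
  rw [gibbsReweight, div_le_one hD]
  linarith [hP.2]

theorem gibbsReweight_monotoneOn (ha : 0 < a) : MonotoneOn (gibbsReweight a) (Set.Icc 0 1) := by
  intro P hP Q hQ hPQ
  rw [gibbsReweight, gibbsReweight, div_le_div_iff₀ (reweight_denom_pos ha hP)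
    (reweight_denom_pos ha hQ)]
  nlinarith

theorem hasDerivAt_gibbsReweight {P : ℝ} (hD : 1 - (1 - a) * P ≠ 0) :
    HasDerivAt (gibbsReweight a) (a / (1 - (1 - a) * P) ^ 2) P := by
  have h := ((hasDerivAt_id' P).const_mul a).div
    (((hasDerivAt_id' P).const_mul (1 - a)).const_sub 1) hD
  refine h.congr_deriv ?_
  congr 1
  ring

end gibbsReweight

section coordinate

variable {a c : ℝ}

theorem violationProb_mul_mem_Icc (hc : c ∈ Set.Icc 0 1) (t : ℝ) :
    violationProb t * c ∈ Set.Icc 0 1 :=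
  ⟨mul_nonneg (violationProb_pos t).le hc.1,
    mul_le_one₀ (violationProb_lt_one t).le hc.1 hc.2⟩

theorem gibbsReweight_violationProb_antitone (ha : 0 < a) (hc : c ∈ Set.Icc 0 1) :
    Antitone fun t => gibbsReweight a (violationProb t * c) := by
  intro s t hst
  exact gibbsReweight_monotoneOn ha (violationProb_mul_mem_Icc hc t)
    (violationProb_mul_mem_Icc hc s)
    (mul_le_mul_of_nonneg_right (violationProb_strictAnti.antitone hst) hc.1)

theorem hasDerivAt_gibbsReweight_violationProb (ha : 0 < a) (hc : c ∈ Set.Icc 0 1) (t : ℝ) :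
    HasDerivAt (fun t => gibbsReweight a (violationProb t * c))
      (-(2 * a * (violationProb t * c) * (1 - violationProb t)) /
        (1 - (1 - a) * (violationProb t * c)) ^ 2) t := by
  have hD := (reweight_denom_pos ha (violationProb_mul_mem_Icc hc t)).ne'
  refine ((hasDerivAt_gibbsReweight hD).comp t
    ((hasDerivAt_violationProb t).mul_const c)).congr_deriv ?_
  ring

theorem gibbsReweight_violationProb_deriv_mem_Icc (ha : 0 < a) (hc : c ∈ Set.Icc 0 1) (t : ℝ) :
    -(2 * a * (violationProb t * c) * (1 - violationProb t)) /
        (1 - (1 - a) * (violationProb t * c)) ^ 2 ∈ Set.Icc (-(1 / 2)) 0 := by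
  set p := violationProb t
  have hp0 := (violationProb_pos t).le
  have hp1 := (violationProb_lt_one t).le
  have hP : p * c ∈ Set.Icc 0 1 := violationProb_mul_mem_Icc hc t
  have hD := pow_pos (reweight_denom_pos ha hP) 2
  have hnum : 0 ≤ 2 * a * (p * c) * (1 - p) := by
    have := mul_nonneg (mul_nonneg ha.le hP.1) (sub_nonneg.mpr hp1)
    linarith
  have hamgm : 2 * a * (p * c) * (1 - p) ≤ (1 - (1 - a) * (p * c)) ^ 2 / 2 := by
    have : p * c ≤ p := mul_le_of_le_one_right hp0 hc.2
    nlinarith [four_mul_le_sq_reweight_denom a (p * c), mul_nonneg ha.le hP.1]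
  refine ⟨?_, div_nonpos_of_nonpos_of_nonneg (neg_nonpos.mpr hnum) hD.le⟩
  rw [neg_div, neg_le_neg_iff, div_le_iff₀ hD]
  linarith

end coordinate

theorem clause_energy_g_props_general (k : ℕ) (β : ℝ)
    (g : (Fin k → ℝ) → ℝ)
    (hg : ∀ x, g x =
      (Real.exp (-β) * ∏ i, (1 - Real.tanh (x i)) / 2) /
      (1 - (1 - Real.exp (-β)) * ∏ i, (1 - Real.tanh (x i)) / 2)) :
    (∀ x, 0 ≤ g x ∧ g x ≤ 1) ∧
    (∀ (x : Fin k → ℝ) (i : Fin k) (s t : ℝ), s ≤ t →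
      g (Function.update x i t) ≤ g (Function.update x i s)) ∧
    (∀ (x : Fin k → ℝ) (i : Fin k),
      -1 ≤ deriv (fun t => g (Function.update x i t)) (x i) ∧
      deriv (fun t => g (Function.update x i t)) (x i) ≤ 0) := by
  have ha : 0 < exp (-β) := exp_pos _
  have hg' : ∀ x, g x = gibbsReweight (exp (-β)) (∏ i, violationProb (x i)) := hg
  have hline : ∀ x i t, g (update x i t) =
      gibbsReweight (exp (-β)) (violationProb t * ∏ j ∈ univ \ {i}, violationProb (x j)) := by
    intro x i t
    rw [hg', prod_apply_update]
  refine ⟨fun x => ?_, fun x i s t hst => ?_, fun x i => ?_⟩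
  · rw [hg']
    exact gibbsReweight_mem_Icc ha (prod_violationProb_mem_Icc _ x)
  · rw [hline, hline]
    exact gibbsReweight_violationProb_antitone ha (prod_violationProb_mem_Icc _ x) hst
  · have hc := prod_violationProb_mem_Icc (univ \ {i}) x
    simp only [hline]
    rw [(hasDerivAt_gibbsReweight_violationProb ha hc (x i)).deriv]
    have := gibbsReweight_violationProb_deriv_mem_Icc ha hc (x i)
    exact ⟨by linarith [this.1], this.2⟩

theorem clause_energy_g_props (k : ℕ) (hk : 2 ≤ k) (β : ℝ) (hβ : 0 ≤ β)
    (g : (Fin k → ℝ) → ℝ)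
    (hg : ∀ x, g x =
      (Real.exp (-β) * ∏ i, (1 - Real.tanh (x i)) / 2) /
      (1 - (1 - Real.exp (-β)) * ∏ i, (1 - Real.tanh (x i)) / 2)) :
    (∀ x, 0 ≤ g x ∧ g x ≤ 1) ∧
    (∀ (x : Fin k → ℝ) (i : Fin k) (s t : ℝ), s ≤ t →
      g (Function.update x i t) ≤ g (Function.update x i s)) ∧
    (∀ (x : Fin k → ℝ) (i : Fin k),
      -1 ≤ deriv (fun t => g (Function.update x i t)) (x i) ∧
      deriv (fun t => g (Function.update x i t)) (x i) ≤ 0) :=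
  clause_energy_g_props_general k β g hg
end

section
/- Let h̲ ≤ h̄ be real random variables and let g̃ : ℝ → ℝ satisfy 0 ≤ g̃(x) ≤ 1 and -1 ≤ g̃'(x) ≤ 0 for all x. Then for every Δ > 0, E[g̃(h̲) - g̃(h̄)] ≤ ((1 + Δ)/tanh Δ) · E[tanh(h̄ - h̲)]. -/
open MeasureTheory

lemma aux_self_le_tanh (t : ℝ) (ht : 0 ≤ t) : t ≤ (1 + t) * Real.tanh t := by
  rw [Real.tanh_eq_sinh_div_cosh, Real.sinh_eq, Real.cosh_eq]
  have hc : 0 < (Real.exp t + Real.exp (-t)) / 2 := by positivity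
  rw [← mul_div_assoc, le_div_iff₀ hc]
  have h1 := Real.add_one_le_exp (2 * t)
  have h2 : Real.exp t * Real.exp (-t) = 1 := by
    rw [← Real.exp_add]; simp
  have h3 : Real.exp (2 * t) = Real.exp t * Real.exp t := by
    rw [← Real.exp_add]; ring_nf
  have h4 : 0 < Real.exp (-t) := Real.exp_pos _
  nlinarith [Real.exp_pos t]

lemma aux_tanh_mono {a b : ℝ} (hab : a ≤ b) : Real.tanh a ≤ Real.tanh b := by
  rw [Real.tanh_eq_sinh_div_cosh, Real.tanh_eq_sinh_div_cosh, Real.sinh_eq,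
    Real.cosh_eq, Real.sinh_eq, Real.cosh_eq]
  have ha : (0:ℝ) < (Real.exp a + Real.exp (-a)) / 2 := by positivity
  have hb : (0:ℝ) < (Real.exp b + Real.exp (-b)) / 2 := by positivity
  rw [div_le_div_iff₀ ha hb]
  have h1 : Real.exp a * Real.exp (-a) = 1 := by rw [← Real.exp_add]; simp
  have h2 : Real.exp b * Real.exp (-b) = 1 := by rw [← Real.exp_add]; simp
  have h3 : Real.exp a ≤ Real.exp b := Real.exp_le_exp.mpr hab
  have h4 : 0 < Real.exp a := Real.exp_pos _
  have h5 : 0 < Real.exp b := Real.exp_pos _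
  have h6 : 0 < Real.exp (-a) := Real.exp_pos _
  have h7 : 0 < Real.exp (-b) := Real.exp_pos _
  nlinarith [mul_pos h6 h7]

lemma aux_tanh_le_one (x : ℝ) : Real.tanh x ≤ 1 := by
  rw [Real.tanh_eq_sinh_div_cosh, div_le_one (Real.cosh_pos x)]
  exact (Real.sinh_lt_cosh x).le

lemma aux_key (t Δ : ℝ) (ht : 0 ≤ t) (hΔ : 0 < Δ) :
    min t 1 ≤ ((1 + Δ) / Real.tanh Δ) * Real.tanh t := by
  have htΔ : 0 < Real.tanh Δ := by
    have := aux_self_le_tanh Δ hΔ.le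
    nlinarith
  have ht0 : 0 ≤ Real.tanh t := by
    have := Real.tanh_zero
    calc (0:ℝ) = Real.tanh 0 := Real.tanh_zero.symm
      _ ≤ Real.tanh t := aux_tanh_mono ht
  rcases le_or_gt Δ t with h | h
  · -- t ≥ Δ: RHS ≥ 1+Δ ≥ 1 ≥ min
    have h1 : Real.tanh Δ ≤ Real.tanh t := aux_tanh_mono h
    have h2 : (1 + Δ) ≤ ((1 + Δ) / Real.tanh Δ) * Real.tanh t := by
      rw [div_mul_eq_mul_div, le_div_iff₀ htΔ]
      nlinarith
    calc min t 1 ≤ 1 := min_le_right _ _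
      _ ≤ 1 + Δ := by linarith
      _ ≤ _ := h2
  · -- t < Δ: min ≤ t ≤ (1+t) tanh t ≤ (1+Δ) tanh t ≤ RHS since tanh Δ ≤ 1
    have h1 : t ≤ (1 + t) * Real.tanh t := aux_self_le_tanh t ht
    have h2 : Real.tanh Δ ≤ 1 := aux_tanh_le_one Δ
    calc min t 1 ≤ t := min_le_left _ _
      _ ≤ (1 + Δ) * Real.tanh t := by nlinarith
      _ ≤ ((1 + Δ) / Real.tanh Δ) * Real.tanh t := by
          apply mul_le_mul_of_nonneg_right _ ht0
          rw [le_div_iff₀ htΔ]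
          nlinarith
      _ = _ := rfl

theorem smoothing_bound {Ω : Type*} [MeasurableSpace Ω]
    (μ : Measure Ω) [IsProbabilityMeasure μ]
    (hlo hhi : Ω → ℝ) (hlo_m : Measurable hlo) (hhi_m : Measurable hhi)
    (hle : ∀ᵐ ω ∂μ, hlo ω ≤ hhi ω)
    (g : ℝ → ℝ) (hg_diff : Differentiable ℝ g)
    (hg_bd : ∀ x, 0 ≤ g x ∧ g x ≤ 1)
    (hg_deriv : ∀ x, -1 ≤ deriv g x ∧ deriv g x ≤ 0)
    (hint1 : Integrable (fun ω => g (hlo ω)) μ)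
    (hint2 : Integrable (fun ω => g (hhi ω)) μ)
    (hint3 : Integrable (fun ω => Real.tanh (hhi ω - hlo ω)) μ)
    (Δ : ℝ) (hΔ : 0 < Δ) :
    ∫ ω, (g (hlo ω) - g (hhi ω)) ∂μ ≤
      ((1 + Δ) / Real.tanh Δ) * ∫ ω, Real.tanh (hhi ω - hlo ω) ∂μ := by
  have hlip : LipschitzWith 1 g := by
    apply lipschitzWith_of_nnnorm_deriv_le hg_diff
    intro x
    have h := hg_deriv x
    rw [← NNReal.coe_le_coe]
    simp only [coe_nnnorm, Real.norm_eq_abs, NNReal.coe_one]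
    rw [abs_le]; constructor <;> linarith [h.1, h.2]
  have hptw : ∀ᵐ ω ∂μ, g (hlo ω) - g (hhi ω) ≤
      ((1 + Δ) / Real.tanh Δ) * Real.tanh (hhi ω - hlo ω) := by
    filter_upwards [hle] with ω hω
    set t := hhi ω - hlo ω with htdef
    have ht : 0 ≤ t := by simp [htdef]; linarith
    have h1 : g (hlo ω) - g (hhi ω) ≤ min t 1 := by
      have hlipb : g (hlo ω) - g (hhi ω) ≤ t := by
        have := hlip.dist_le_mul (hlo ω) (hhi ω)
        rw [Real.dist_eq, Real.dist_eq] at this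
        have h2 : |g (hlo ω) - g (hhi ω)| ≤ |hlo ω - hhi ω| := by simpa using this
        have h3 : |hlo ω - hhi ω| = t := by rw [abs_sub_comm, abs_of_nonneg ht]
        calc g (hlo ω) - g (hhi ω) ≤ |g (hlo ω) - g (hhi ω)| := le_abs_self _
          _ ≤ t := h3 ▸ h2
      have hb : g (hlo ω) - g (hhi ω) ≤ 1 := by
        have := (hg_bd (hlo ω)).2
        have := (hg_bd (hhi ω)).1
        linarith
      exact le_min hlipb hb
    exact h1.trans (aux_key t Δ ht hΔ)
  calc ∫ ω, (g (hlo ω) - g (hhi ω)) ∂μ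
      ≤ ∫ ω, ((1 + Δ) / Real.tanh Δ) * Real.tanh (hhi ω - hlo ω) ∂μ :=
        integral_mono_ae (hint1.sub hint2) (hint3.const_mul _) hptw
    _ = ((1 + Δ) / Real.tanh Δ) * ∫ ω, Real.tanh (hhi ω - hlo ω) ∂μ :=
        integral_const_mul _ _
end

section
/- Let E : {0,1}^N → ℝ_{≥0}, Z(β) = ∑_x e^{-β E(x)}, U(β) the mean of E under the Boltzmann distribution μ_β, and Ξ(ζ) = #{x : E(x) ≤ ζ}. Then log Z(β) - log 2 ≤ log Ξ(2U(β)) ≤ log Z(β) + 2β·U(β) for all β ≥ 0 with U(β) > 0. -/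
theorem sandwich_estimate (N : ℕ) (E : (Fin N → Bool) → ℝ)
    (hE : ∀ x, 0 ≤ E x) (β : ℝ) (hβ : 0 ≤ β)
    (Z : ℝ) (hZ : Z = ∑ x : Fin N → Bool, Real.exp (-β * E x))
    (U : ℝ) (hU : U = ∑ x : Fin N → Bool, E x * (Real.exp (-β * E x) / Z))
    (hU0 : 0 < U)
    (Ξ : ℝ) (hΞ : Ξ = (Finset.univ.filter (fun x : Fin N → Bool => E x ≤ 2 * U)).card) :
    Real.log Z - Real.log 2 ≤ Real.log Ξ ∧
    Real.log Ξ ≤ Real.log Z + 2 * β * U := by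
  have hne : (Finset.univ : Finset (Fin N → Bool)).Nonempty := Finset.univ_nonempty
  have hZpos : 0 < Z := by
    rw [hZ]; exact Finset.sum_pos (fun x _ => Real.exp_pos _) hne
  have hUZ : ∑ x : Fin N → Bool, E x * Real.exp (-β * E x) = U * Z := by
    rw [hU, Finset.sum_mul]
    refine Finset.sum_congr rfl fun x _ => ?_
    field_simp
  set P := fun x : Fin N → Bool => E x ≤ 2 * U with hP
  set good := ∑ x ∈ Finset.univ.filter P, Real.exp (-β * E x) with hgood
  set bad := ∑ x ∈ Finset.univ.filter (fun x => ¬ P x), Real.exp (-β * E x) with hbad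
  have hsplit : good + bad = Z := by
    rw [hZ, hgood, hbad, Finset.sum_filter_add_sum_filter_not]
  have hbadle : bad ≤ Z / 2 := by
    have h1 : bad ≤ ∑ x ∈ Finset.univ.filter (fun x => ¬ P x),
        E x / (2 * U) * Real.exp (-β * E x) := by
      refine Finset.sum_le_sum fun x hx => ?_
      have hx' : 2 * U < E x := by
        simpa [hP] using (Finset.mem_filter.mp hx).2
      have h2U : 0 < 2 * U := by linarith
      exact le_mul_of_one_le_left (Real.exp_pos _).le ((one_le_div h2U).mpr hx'.le)
    have h2 : ∑ x ∈ Finset.univ.filter (fun x => ¬ P x),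
        E x / (2 * U) * Real.exp (-β * E x)
        ≤ ∑ x : Fin N → Bool, E x / (2 * U) * Real.exp (-β * E x) := by
      refine Finset.sum_le_sum_of_subset_of_nonneg (Finset.filter_subset _ _)
        fun x _ _ => ?_
      exact mul_nonneg (div_nonneg (hE x) (by linarith)) (Real.exp_pos _).le
    have h3 : ∑ x : Fin N → Bool, E x / (2 * U) * Real.exp (-β * E x)
        = Z / 2 := by
      have : ∑ x : Fin N → Bool, E x / (2 * U) * Real.exp (-β * E x)
          = (∑ x : Fin N → Bool, E x * Real.exp (-β * E x)) / (2 * U) := by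
        rw [Finset.sum_div]
        exact Finset.sum_congr rfl fun x _ => by ring
      rw [this, hUZ]
      field_simp
    linarith
  have hgoodge : Z / 2 ≤ good := by linarith
  have hgoodle : good ≤ Ξ := by
    rw [hΞ, hgood]
    calc ∑ x ∈ Finset.univ.filter P, Real.exp (-β * E x)
        ≤ ∑ _x ∈ Finset.univ.filter P, (1 : ℝ) := by
          refine Finset.sum_le_sum fun x _ => ?_
          rw [Real.exp_le_one_iff]
          have := hE x
          nlinarith
      _ = (Finset.univ.filter P).card := by simp
  have hΞpos : 0 < Ξ := lt_of_lt_of_le (by linarith) (le_trans hgoodge hgoodle)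
  have hΞle : Ξ ≤ Real.exp (2 * β * U) * Z := by
    rw [hΞ]
    have : ((Finset.univ.filter P).card : ℝ)
        = ∑ _x ∈ Finset.univ.filter P, (1 : ℝ) := by simp
    rw [this]
    calc ∑ _x ∈ Finset.univ.filter P, (1 : ℝ)
        ≤ ∑ x ∈ Finset.univ.filter P, Real.exp (2 * β * U) * Real.exp (-β * E x) := by
          refine Finset.sum_le_sum fun x hx => ?_
          have hx' : E x ≤ 2 * U := by simpa [hP] using (Finset.mem_filter.mp hx).2
          rw [← Real.exp_add]
          have : 0 ≤ 2 * β * U + -β * E x := by nlinarith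
          calc (1:ℝ) = Real.exp 0 := by simp
            _ ≤ _ := Real.exp_le_exp.mpr this
      _ = Real.exp (2 * β * U) * good := by rw [hgood, Finset.mul_sum]
      _ ≤ Real.exp (2 * β * U) * Z := by
          have : good ≤ Z := by
            have : 0 ≤ bad := Finset.sum_nonneg fun x _ => (Real.exp_pos _).le
            linarith
          nlinarith [Real.exp_pos (2 * β * U)]
  constructor
  · have h' := Real.log_le_log (by linarith : (0:ℝ) < Z / 2) (le_trans hgoodge hgoodle)
    rw [Real.log_div hZpos.ne' (by norm_num)] at h'
    linarith
  · have h := Real.log_le_log hΞpos hΞle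
    rw [Real.log_mul (Real.exp_pos _).ne' hZpos.ne', Real.log_exp] at h
    linarith
end

section
/- Let κ(α) = k(k-1)·α·(1 - (1/4)e^{-kα/2})·(1 - (1/2)e^{-kα/2})^{k-2} and let α*(k) be the smallest positive root of κ(α) = 1. Then α*(k) = (2 log k)/k · (1 + O(log log k / log k)) as k → ∞; in particular, for every ε > 0 there is k₀ such that for all k ≥ k₀, (1-ε)·(2 log k)/k · (1 - C·log log k/log k) ≤ α*(k) ≤ (2 log k)/k · (1 + C·log log k/log k) for a universal constant C. -/
open Real Filter

set_option maxHeartbeats 2000000 in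
theorem alpha_star_asymptotics
    (κ : ℕ → ℝ → ℝ)
    (hκ : ∀ (k : ℕ) (α : ℝ), κ k α =
      k * (k - 1) * α * (1 - (1 / 4) * Real.exp (-(k * α) / 2)) *
      (1 - (1 / 2) * Real.exp (-(k * α) / 2)) ^ (k - 2))
    (αstar : ℕ → ℝ)
    (hroot : ∀ k, 2 ≤ k → 0 < αstar k ∧ κ k (αstar k) = 1 ∧
      ∀ a : ℝ, 0 < a → κ k a = 1 → αstar k ≤ a) :
    ∃ C : ℝ, 0 < C ∧ ∀ ε : ℝ, 0 < ε → ∃ k₀ : ℕ, ∀ k : ℕ, k₀ ≤ k →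
      (1 - ε) * (2 * Real.log k / k) * (1 - C * Real.log (Real.log k) / Real.log k)
        ≤ αstar k ∧
      αstar k ≤ (2 * Real.log k / k) * (1 + C * Real.log (Real.log k) / Real.log k) := by
  refine ⟨1, one_pos, fun ε hε => ?_⟩
  set ε' : ℝ := min ε (1/2) with hε'def
  have hε'0 : 0 < ε' := lt_min hε one_half_pos
  have hε'le : ε' ≤ 1/2 := min_le_right _ _
  have hε'ε : ε' ≤ ε := min_le_left _ _
  obtain ⟨m, hm⟩ := Filter.eventually_atTop.mp
    ((Real.tendsto_log_atTop.comp tendsto_natCast_atTop_atTop).eventually_gt_atTop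
      (48 / ε' ^ 2))
  refine ⟨max m 4, fun k hk => ?_⟩
  have hkm : m ≤ k := le_trans (le_max_left _ _) hk
  have hk4 : 4 ≤ k := le_trans (le_max_right _ _) hk
  have hk2 : 2 ≤ k := by omega
  set L : ℝ := Real.log k with hLdef
  have hL48 : 48 / ε' ^ 2 < L := hm k hkm
  have hkR : (4:ℝ) ≤ (k:ℝ) := by exact_mod_cast hk4
  have hkpos : (0:ℝ) < k := by linarith
  have hL1 : 1 ≤ L := by
    have h1 : ε' ^ 2 ≤ 1/4 := by nlinarith
    have h2 : (192:ℝ) ≤ 48 / ε' ^ 2 := by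
      rw [le_div_iff₀ (by positivity)]; nlinarith
    linarith
  have hLpos : 0 < L := by linarith
  have hexpL : Real.exp L = k := Real.exp_log hkpos
  have hllk0 : 0 ≤ Real.log L := Real.log_nonneg hL1
  have hllkL : Real.log L ≤ L := by
    have := Real.log_le_sub_one_of_pos hLpos
    linarith
  have hcast : ((k - 2 : ℕ) : ℝ) = (k:ℝ) - 2 := by
    rw [Nat.cast_sub hk2]; norm_num
  -- ============ KEY LOWER ESTIMATE ============
  have key : ∀ a : ℝ, 0 < a → (k:ℝ) * a ≤ (1 - ε') * (2 * L) → κ k a < 1 := by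
    intro a ha hta
    set t : ℝ := (k:ℝ) * a with htdef
    have htpos : 0 < t := by positivity
    have ht2L : t ≤ 2 * L := by nlinarith [mul_pos hε'0 hLpos]
    set x : ℝ := Real.exp (-t / 2) with hxdef
    have hxpos : 0 < x := Real.exp_pos _
    have hx1 : x ≤ 1 := by
      rw [hxdef]; apply Real.exp_le_one_iff.mpr; linarith
    set E : ℝ := Real.exp (ε' * L) with hEdef
    have hEpos : 0 < E := Real.exp_pos _
    -- x ≥ E / k
    have hxlb : E / k ≤ x := by
      have harg : (ε' - 1) * L ≤ -t / 2 := by nlinarith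
      have hhh : Real.exp ((ε' - 1) * L) ≤ x := Real.exp_le_exp.mpr harg
      calc E / k = Real.exp (ε' * L) / Real.exp L := by rw [hEdef, hexpL]
        _ = Real.exp (ε' * L - L) := (Real.exp_sub _ _).symm
        _ = Real.exp ((ε' - 1) * L) := by ring_nf
        _ ≤ x := hhh
    -- D bound
    have hbase0 : (0:ℝ) ≤ 1 - (1/2) * x := by linarith
    have hbase : 1 - (1/2) * x ≤ Real.exp (-((1/2) * x)) := by
      have := Real.add_one_le_exp (-((1/2)*x)); linarith
    have hD : (1 - (1/2) * x) ^ (k - 2) ≤ Real.exp (((k-2:ℕ):ℝ) * (-((1/2)*x))) := by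
      calc (1 - (1/2) * x) ^ (k - 2)
          ≤ (Real.exp (-((1/2)*x))) ^ (k-2) := pow_le_pow_left₀ hbase0 hbase _
        _ = Real.exp (((k-2:ℕ):ℝ) * (-((1/2)*x))) := (Real.exp_nat_mul _ _).symm
    have hexparg : E / 4 ≤ ((k:ℝ) - 2) * ((1/2) * x) := by
      have h1 : E ≤ x * k := by
        rw [div_le_iff₀ hkpos] at hxlb; linarith
      nlinarith [mul_nonneg hxpos.le (show (0:ℝ) ≤ (k:ℝ) - 4 by linarith)]
    have hD2 : (1 - (1/2) * x) ^ (k - 2) ≤ Real.exp (-(E/4)) := by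
      refine le_trans hD (Real.exp_le_exp.mpr ?_)
      rw [hcast]; nlinarith
    -- A bound
    have hA : (k:ℝ) * ((k:ℝ) - 1) * a ≤ 2 * k * L := by
      have h1 : ((k:ℝ) - 1) * t ≤ (k:ℝ) * t := by nlinarith
      have h2 : (k:ℝ) * t ≤ (k:ℝ) * (2 * L) := mul_le_mul_of_nonneg_left ht2L hkpos.le
      calc (k:ℝ) * ((k:ℝ) - 1) * a = ((k:ℝ) - 1) * t := by rw [htdef]; ring
        _ ≤ (k:ℝ) * (2 * L) := le_trans h1 h2
        _ = 2 * k * L := by ring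
    have hApos : 0 < (k:ℝ) * ((k:ℝ) - 1) * a := by
      have h3 : (0:ℝ) < (k:ℝ) - 1 := by linarith
      positivity
    have hB1 : 1 - (1/4) * x ≤ 1 := by linarith
    have hBpos : 0 < 1 - (1/4) * x := by linarith
    rw [hκ]
    have hxx : Real.exp (-((k:ℝ) * a) / 2) = x := by rw [hxdef, htdef]
    rw [hxx]
    have hfinal : (k:ℝ) * ((k:ℝ) - 1) * a * (1 - 1/4 * x) * (1 - 1/2 * x) ^ (k-2)
        ≤ 2 * k * L * Real.exp (-(E/4)) := by
      have s1 : (k:ℝ) * ((k:ℝ) - 1) * a * (1 - 1/4 * x) ≤ 2 * k * L := by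
        calc (k:ℝ) * ((k:ℝ) - 1) * a * (1 - 1/4 * x)
            ≤ (k:ℝ) * ((k:ℝ) - 1) * a * 1 := mul_le_mul_of_nonneg_left hB1 hApos.le
          _ = (k:ℝ) * ((k:ℝ) - 1) * a := mul_one _
          _ ≤ 2 * k * L := hA
      have s2 : 0 ≤ (k:ℝ) * ((k:ℝ) - 1) * a * (1 - 1/4 * x) :=
        mul_nonneg hApos.le hBpos.le
      calc (k:ℝ) * ((k:ℝ) - 1) * a * (1 - 1/4 * x) * (1 - 1/2 * x) ^ (k-2)
          ≤ (k:ℝ) * ((k:ℝ) - 1) * a * (1 - 1/4 * x) * Real.exp (-(E/4)) :=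
            mul_le_mul_of_nonneg_left hD2 s2
        _ ≤ 2 * k * L * Real.exp (-(E/4)) :=
            mul_le_mul_of_nonneg_right s1 (Real.exp_pos _).le
    have h2kL : 2 * (k:ℝ) * L ≤ Real.exp (3 * L) := by
      have e2 : (2:ℝ) ≤ Real.exp L := by
        have := Real.add_one_le_exp L; linarith
      have eL : L ≤ Real.exp L := by
        have := Real.add_one_le_exp L; linarith
      have ek : (k:ℝ) = Real.exp L := hexpL.symm
      calc 2 * (k:ℝ) * L ≤ Real.exp L * Real.exp L * Real.exp L := by
            rw [ek]; nlinarith [Real.exp_pos L]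
        _ = Real.exp (L + L + L) := by rw [← Real.exp_add, ← Real.exp_add]
        _ = Real.exp (3 * L) := by ring_nf
    have hE12 : 12 * L < E := by
      have h48 : 48 < ε' ^ 2 * L := by
        rw [div_lt_iff₀ (by positivity)] at hL48; linarith
      have hhalf : 1 + ε' * L / 2 ≤ Real.exp (ε' * L / 2) := by
        have := Real.add_one_le_exp (ε' * L / 2); linarith
      have hsq : E = Real.exp (ε' * L / 2) ^ 2 := by
        rw [hEdef, sq, ← Real.exp_add]; ring_nf
      have hpos2 : (0:ℝ) ≤ 1 + ε' * L / 2 := by positivity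
      have hEge : (1 + ε' * L / 2) ^ 2 ≤ E := by
        rw [hsq]; exact pow_le_pow_left₀ hpos2 hhalf 2
      nlinarith [mul_lt_mul_of_pos_right h48 hLpos, mul_pos hε'0 hLpos]
    have hlast : 2 * (k:ℝ) * L * Real.exp (-(E/4)) < 1 := by
      have h1 : 2 * (k:ℝ) * L * Real.exp (-(E/4)) ≤ Real.exp (3*L) * Real.exp (-(E/4)) :=
        mul_le_mul_of_nonneg_right h2kL (Real.exp_pos _).le
      have h2 : Real.exp (3*L) * Real.exp (-(E/4)) = Real.exp (3*L - E/4) := by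
        rw [← Real.exp_add]; ring_nf
      have h3 : Real.exp (3*L - E/4) < 1 := by
        apply Real.exp_lt_one_iff.mpr; linarith
      rw [h2] at h1; linarith
    linarith
  -- ============ UPPER BOUND: κ k (2L/k) ≥ 1 ============
  have hb : (0:ℝ) < 2 * L / k := by positivity
  have hupper1 : 1 ≤ κ k (2 * L / k) := by
    rw [hκ]
    have hkb : (k:ℝ) * (2 * L / k) = 2 * L := by field_simp
    rw [hkb]
    have hxval : Real.exp (-(2 * L) / 2) = (k:ℝ)⁻¹ := by
      have h0 : -(2*L)/2 = -L := by ring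
      rw [h0, Real.exp_neg, hexpL]
    rw [hxval]
    set x : ℝ := (k:ℝ)⁻¹ with hxdef
    have hx0 : 0 < x := by positivity
    have hxk : x * k = 1 := by rw [hxdef]; field_simp
    have hx14 : x ≤ 1/4 := by nlinarith
    have hbern : 1 + ((k-2:ℕ):ℝ) * (-(1/2) * x) ≤ (1 + (-(1/2) * x)) ^ (k - 2) := by
      apply one_add_mul_le_pow; nlinarith
    have hcomp : (1:ℝ)/2 ≤ 1 + ((k-2:ℕ):ℝ) * (-(1/2) * x) := by
      rw [hcast]
      have hk2x : ((k:ℝ) - 2) * x ≤ 1 := by nlinarith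
      nlinarith
    have hP : (1:ℝ)/2 ≤ (1 - (1/2) * x) ^ (k - 2) := by
      have heq : (1 + (-(1/2) * x)) = 1 - (1/2) * x := by ring
      calc (1:ℝ)/2 ≤ 1 + ((k-2:ℕ):ℝ) * (-(1/2) * x) := hcomp
        _ ≤ (1 + (-(1/2) * x)) ^ (k - 2) := hbern
        _ = (1 - (1/2) * x) ^ (k - 2) := by rw [heq]
    have hA : (6:ℝ) ≤ (k:ℝ) * ((k:ℝ) - 1) * (2 * L / k) := by
      have heq : (k:ℝ) * ((k:ℝ) - 1) * (2 * L / k) = ((k:ℝ) - 1) * (2 * L) := by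
        field_simp
      rw [heq]; nlinarith
    have hB : (3:ℝ)/4 ≤ 1 - (1/4) * x := by linarith
    have hApos : (0:ℝ) ≤ (k:ℝ) * ((k:ℝ) - 1) * (2 * L / k) := by linarith
    have m1 : (6:ℝ) * (3/4) ≤ (k:ℝ) * ((k:ℝ) - 1) * (2 * L / k) * (1 - (1/4) * x) :=
      mul_le_mul hA hB (by norm_num) hApos
    have m2 : (6:ℝ) * (3/4) * (1/2) ≤
        (k:ℝ) * ((k:ℝ) - 1) * (2 * L / k) * (1 - (1/4) * x) * ((1 - (1/2) * x) ^ (k - 2)) :=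
      mul_le_mul m1 hP (by norm_num) (by nlinarith)
    exact le_trans (by norm_num) m2
  have hcont : ContinuousOn (κ k) (Set.Icc 0 (2 * L / k)) := by
    have hfun : κ k = fun a => (k:ℝ) * ((k:ℝ) - 1) * a * (1 - (1/4) * Real.exp (-((k:ℝ)*a)/2)) *
        (1 - (1/2) * Real.exp (-((k:ℝ)*a)/2)) ^ (k - 2) := funext (hκ k)
    rw [hfun]
    have cexp : Continuous fun a : ℝ => Real.exp (-((k:ℝ)*a)/2) :=
      Real.continuous_exp.comp
        (Continuous.div_const (Continuous.neg (continuous_const.mul continuous_id)) 2)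
    exact ((((continuous_const.mul continuous_id).mul
      (continuous_const.sub (continuous_const.mul cexp))).mul
      ((continuous_const.sub (continuous_const.mul cexp)).pow (k-2))).continuousOn)
  have hκ0 : κ k 0 = 0 := by rw [hκ]; ring
  have hIVT : ∃ c ∈ Set.Icc (0:ℝ) (2 * L / k), κ k c = 1 := by
    have h1 : (1:ℝ) ∈ Set.Icc (κ k 0) (κ k (2 * L / k)) := by
      rw [hκ0]; exact ⟨by norm_num, hupper1⟩
    obtain ⟨c, hc, hc1⟩ := intermediate_value_Icc hb.le hcont h1
    exact ⟨c, hc, hc1⟩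
  obtain ⟨c, ⟨hc0, hc2⟩, hc1⟩ := hIVT
  have hcpos : 0 < c := by
    rcases lt_or_eq_of_le hc0 with h | h
    · exact h
    · exfalso; rw [← h] at hc1; rw [hκ0] at hc1; norm_num at hc1
  obtain ⟨hαpos, hαroot, hαmin⟩ := hroot k hk2
  have hαupper : αstar k ≤ 2 * L / k := le_trans (hαmin c hcpos hc1) hc2
  constructor
  · -- lower bound
    have hstep : (1 - ε') * (2 * L / k) < αstar k := by
      by_contra hcon
      push_neg at hcon
      have h1 : (k:ℝ) * αstar k ≤ (k:ℝ) * ((1 - ε') * (2 * L / k)) :=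
        mul_le_mul_of_nonneg_left hcon hkpos.le
      have hkne : (k:ℝ) ≠ 0 := ne_of_gt hkpos
      have h2 : (k:ℝ) * ((1 - ε') * (2 * L / k)) = (1 - ε') * (2 * L) := by
        calc (k:ℝ) * ((1 - ε') * (2 * L / k)) = (1 - ε') * (2 * L) * ((k:ℝ)/k) := by ring
          _ = (1 - ε') * (2 * L) := by rw [div_self hkne, mul_one]
      have h3 := key (αstar k) hαpos (by rw [h2] at h1; exact h1)
      rw [hαroot] at h3; exact lt_irrefl 1 h3
    have hT0 : 0 ≤ 1 - 1 * Real.log L / L := by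
      rw [one_mul, sub_nonneg, div_le_one hLpos]; exact hllkL
    have hT1 : 1 - 1 * Real.log L / L ≤ 1 := by
      have : 0 ≤ Real.log L / L := div_nonneg hllk0 hLpos.le
      rw [one_mul]; linarith
    rcases le_or_gt (1 - ε) 0 with h | h
    · have hle : (1 - ε) * (2 * L / k) * (1 - 1 * Real.log L / L) ≤ 0 :=
        mul_nonpos_of_nonpos_of_nonneg (mul_nonpos_of_nonpos_of_nonneg h hb.le) hT0
      linarith
    · have hXpos : 0 < (1 - ε) * (2 * L / k) := mul_pos h hb
      have h1 : (1 - ε) * (2 * L / k) * (1 - 1 * Real.log L / L)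
          ≤ (1 - ε) * (2 * L / k) := by
        calc (1 - ε) * (2 * L / k) * (1 - 1 * Real.log L / L)
            ≤ (1 - ε) * (2 * L / k) * 1 := mul_le_mul_of_nonneg_left hT1 hXpos.le
          _ = (1 - ε) * (2 * L / k) := mul_one _
      have h2 : (1 - ε) * (2 * L / k) ≤ (1 - ε') * (2 * L / k) :=
        mul_le_mul_of_nonneg_right (by linarith) hb.le
      linarith
  · -- upper bound
    have h1 : (1:ℝ) ≤ 1 + 1 * Real.log L / L := by
      have : 0 ≤ Real.log L / L := div_nonneg hllk0 hLpos.le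
      rw [one_mul]; linarith
    calc αstar k ≤ 2 * L / k := hαupper
      _ = 2 * L / k * 1 := (mul_one _).symm
      _ ≤ 2 * L / k * (1 + 1 * Real.log L / L) :=
          mul_le_mul_of_nonneg_left h1 hb.le
end
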